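/- arXiv:math/0301115 — 2 statements merged into one kernel-verified Lean document; each statement's English description precedes it below -/
import Mathlib

section
/- Let q > 1 be a real number and z a complex number with |z| = 1 and z ≠ 1. Then |(1 - q^{-1}z)/(1 - z)|² · Σ_{m=0}^{∞} q^{-m}(1 - q^{-1}) |1 - z^{m+1}|² = 1 + q^{-1}. -/
/-!
On the unit circle `‖1 - w‖² = 2 - 2 Re w`, so with `t = q⁻¹` the series splits into a geometric
series in `t` and the real part of `∑ tᵐ zᵐ⁺¹ = z / (1 - t z)`. Since
`Re (z / (1 - t z)) = (Re z - t) / ‖1 - t z‖²` and `‖1 - t z‖² = 1 - 2 t Re z + t²`, the identity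
becomes a rational identity in `t` and `Re z`.
-/

open Complex

lemma Complex.sq_norm_one_sub (w : ℂ) : ‖1 - w‖ ^ 2 = 1 - 2 * w.re + ‖w‖ ^ 2 := by
  simp only [Complex.sq_norm, normSq_apply, sub_re, sub_im, one_re, one_im]
  ring

lemma hasSum_pow_mul_re_pow_succ {z : ℂ} {t : ℝ} (htz : ‖(t : ℂ) * z‖ < 1) :
    HasSum (fun m : ℕ => t ^ m * (z ^ (m + 1)).re) (z / (1 - t * z)).re := by
  convert hasSum_re ((hasSum_geometric_of_norm_lt_one htz).mul_left z) using 1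
  · ext m
    rw [mul_pow, ← ofReal_pow, pow_succ, mul_left_comm, re_ofReal_mul, mul_comm z]
  · rw [div_eq_mul_inv]

section UnitCircle

variable {z : ℂ} (hz : ‖z‖ = 1) {t : ℝ}
include hz

lemma norm_ofReal_mul_lt_one_of_norm_eq_one (ht : |t| < 1) : ‖(t : ℂ) * z‖ < 1 := by
  rwa [norm_mul, hz, mul_one, norm_real]

lemma sq_norm_one_sub_ofReal_mul_of_norm_eq_one :
    ‖1 - (t : ℂ) * z‖ ^ 2 = 1 - 2 * t * z.re + t ^ 2 := by
  rw [Complex.sq_norm_one_sub, norm_mul, hz, norm_real, Real.norm_eq_abs, re_ofReal_mul]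
  simp only [mul_one, sq_abs]
  ring

lemma re_div_one_sub_ofReal_mul_of_norm_eq_one :
    (z / (1 - t * z)).re = (z.re - t) / ‖1 - (t : ℂ) * z‖ ^ 2 := by
  have hsq : z.im ^ 2 = 1 - z.re ^ 2 := by rw [← sq_norm_sub_sq_re, hz, one_pow]
  rw [div_re, ← add_div, Complex.sq_norm]
  congr 1
  simp only [sub_re, sub_im, mul_re, mul_im, one_re, one_im, ofReal_re, ofReal_im]
  linear_combination -t * hsq

lemma hasSum_geometric_weight_mul_sq_norm_one_sub_pow (ht : |t| < 1) :
    HasSum (fun m : ℕ => t ^ m * (1 - t) * ‖1 - z ^ (m + 1)‖ ^ 2)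
      (2 - 2 * (1 - t) * (z / (1 - t * z)).re) := by
  have hmass : HasSum (fun m : ℕ => (1 - t) * t ^ m) 1 := by
    have ht1 : 1 - t ≠ 0 := by linarith [le_abs_self t]
    simpa [mul_inv_cancel₀ ht1] using (hasSum_geometric_of_abs_lt_one ht).mul_left (1 - t)
  have hsum := (hmass.mul_left 2).sub ((hasSum_pow_mul_re_pow_succ
    (norm_ofReal_mul_lt_one_of_norm_eq_one hz ht)).mul_left (2 * (1 - t)))
  rw [mul_one] at hsum
  refine hsum.congr_fun fun m => ?_
  rw [Complex.sq_norm_one_sub, norm_pow, hz, one_pow]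
  ring

lemma sq_norm_div_one_sub_mul_two_sub_re_eq (hz1 : z ≠ 1) (ht : |t| < 1) :
    ‖(1 - (t : ℂ) * z) / (1 - z)‖ ^ 2 * (2 - 2 * (1 - t) * (z / (1 - t * z)).re) = 1 + t := by
  have hN : ‖1 - (t : ℂ) * z‖ ^ 2 ≠ 0 := by
    refine pow_ne_zero _ (norm_ne_zero_iff.2 (sub_ne_zero.2 fun h => ?_))
    simpa [← h] using norm_ofReal_mul_lt_one_of_norm_eq_one hz ht
  have hD : ‖1 - z‖ ^ 2 = 2 * (1 - z.re) := by
    rw [Complex.sq_norm_one_sub, hz]; ring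
  have hre : 1 - z.re ≠ 0 := by
    have := pow_ne_zero 2 (norm_ne_zero_iff.2 (sub_ne_zero.2 hz1.symm))
    rw [hD] at this
    exact right_ne_zero_of_mul this
  rw [sq_norm_one_sub_ofReal_mul_of_norm_eq_one hz] at hN
  rw [re_div_one_sub_ofReal_mul_of_norm_eq_one hz, norm_div, div_pow, hD,
    sq_norm_one_sub_ofReal_mul_of_norm_eq_one hz]
  field_simp
  ring

end UnitCircle

/-- Series identity computing the norm of the spherical vector for a
tempered unramified principal series (Proposition 8.1). -/
theorem spherical_norm_series_tempered (q : ℝ) (hq : 1 < q) (z : ℂ)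
    (hz : ‖z‖ = 1) (hz1 : z ≠ 1) :
    ‖(1 - (q : ℂ)⁻¹ * z) / (1 - z)‖ ^ 2 *
      ∑' m : ℕ, q⁻¹ ^ m * (1 - q⁻¹) * ‖1 - z ^ (m + 1)‖ ^ 2 =
      1 + q⁻¹ := by
  have ht : |q⁻¹| < 1 := by
    rw [abs_inv, abs_of_pos (zero_lt_one.trans hq)]
    exact inv_lt_one_of_one_lt₀ hq
  rw [(hasSum_geometric_weight_mul_sq_norm_one_sub_pow hz ht).tsum_eq, ← ofReal_inv]
  exact sq_norm_div_one_sub_mul_two_sub_re_eq hz hz1 ht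
end

section
/- Let p be an odd prime, ψ the standard additive character of ℚ_p of order 0, τ ∈ ℤ_p^*, and z ∈ ℚ_p, a ∈ ℚ_p, x ∈ ℤ_p. Then ∫_{ℚ_p} ∫_{ℚ_p} char(z + pℤ_p)(u) · ψ(τ(x y² p² + 2uy − 2ay)) du dy = char(z + pℤ_p)(a), where char(z + pℤ_p) is the indicator function of the coset z + pℤ_p and the Haar measure gives ℤ_p volume 1. -/
/-!
Substituting `u = z + v`, the inner integral is `ψ (τ x y² p² + 2τ (z - a) y)` times the
integral of the character `v ↦ ψ (2τ y v)` over `pℤ_p`. Over a ball of the ultrametric group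
`ℚ_p` (a subgroup), a character integrates to the volume of the ball if it is trivial there and
to `0` otherwise, since translating by a point where it is nontrivial multiplies the integral by
a factor `≠ 1`. Hence the inner integral is `p⁻¹ ψ (2τ (z - a) y)` on `p⁻¹ℤ_p`, where
`ψ (τ x y² p²) = 1`, and `0` off it; the outer integral is the same computation on `p⁻¹ℤ_p`
and gives `p⁻¹ · p` or `0` according as `‖z - a‖ ≤ p⁻¹` or not. The volumes
`μ (pℤ_p) = p⁻¹` and `μ (p⁻¹ℤ_p) = p` come from cutting a ball into `p` translates of the next
smaller one.
-/

open MeasureTheory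

variable {p : ℕ} [Fact p.Prime]

noncomputable instance : MeasurableSpace ℚ_[p] := borel _
instance : BorelSpace ℚ_[p] := ⟨rfl⟩

open Metric Set

lemma IsUltrametricDist.add_mem_closedBall_zero_iff {G : Type*} [NormedAddCommGroup G]
    [IsUltrametricDist G] {g x : G} {r : ℝ} (hg : ‖g‖ ≤ r) :
    g + x ∈ closedBall 0 r ↔ x ∈ closedBall 0 r := by
  rw [mem_closedBall_zero_iff (a := x), closedBall_eq_of_mem (mem_closedBall_zero_iff.mpr hg),
    mem_closedBall_iff_norm, add_sub_cancel_left]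

section Translation

variable {G : Type*} [MeasurableSpace G]

lemma MeasureTheory.Measure.IsAddLeftInvariant.of_measure_preimage_add [AddGroup G]
    [MeasurableAdd G] {μ : Measure G} (h : ∀ (a : G) (s : Set G), μ ((a + ·) ⁻¹' s) = μ s) :
    μ.IsAddLeftInvariant :=
  ⟨fun a => Measure.ext fun s hs => by rw [Measure.map_apply (measurable_const_add a) hs, h]⟩

lemma integral_eq_zero_of_add_left_eq_smul [AddGroup G] [MeasurableAdd G] {μ : Measure G}
    [μ.IsAddLeftInvariant] {𝕜 E : Type*} [NontriviallyNormedField 𝕜] [NormedAddCommGroup E]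
    [NormedSpace ℝ E] [NormedSpace 𝕜 E] [SMulCommClass ℝ 𝕜 E] {f : G → E} {g : G} {c : 𝕜}
    (hc : c ≠ 1) (hf : ∀ x, f (g + x) = c • f x) : ∫ x, f x ∂μ = 0 := by
  have h : ∫ x, f x ∂μ = c • ∫ x, f x ∂μ := calc
    ∫ x, f x ∂μ = ∫ x, f (g + x) ∂μ := (integral_add_left_eq_self f g).symm
    _ = c • ∫ x, f x ∂μ := by simp only [hf, integral_smul]
  have h' : (1 - c) • ∫ x, f x ∂μ = 0 := by rw [sub_smul, one_smul, ← h, sub_self]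
  exact (smul_eq_zero.mp h').resolve_left (sub_ne_zero.mpr hc.symm)

variable [NormedAddCommGroup G] [MeasurableAdd G] (μ : Measure G) [μ.IsAddLeftInvariant]

lemma measure_closedBall_center (x : G) (r : ℝ) : μ (closedBall x r) = μ (closedBall 0 r) := by
  rw [← measure_preimage_add μ x, preimage_add_closedBall, sub_self]

lemma integral_indicator_closedBall_one_mul (f : G → ℂ) (z : G) (r : ℝ) :
    ∫ u, (closedBall z r).indicator (fun _ => 1) u * f u ∂μ =
      ∫ v, (closedBall 0 r).indicator (fun v => f (z + v)) v ∂μ := by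
  rw [← integral_add_left_eq_self _ z]
  congr 1 with v
  have hmem : z + v ∈ closedBall z r ↔ v ∈ closedBall 0 r := by
    rw [mem_closedBall_iff_norm, add_sub_cancel_left, mem_closedBall_zero_iff]
  by_cases hv : v ∈ closedBall 0 r
  · rw [indicator_of_mem (hmem.mpr hv), indicator_of_mem hv, one_mul]
  · rw [indicator_of_notMem (mt hmem.mp hv), indicator_of_notMem hv, zero_mul]

lemma integral_indicator_closedBall_addChar_eq_zero [IsUltrametricDist G] (χ : AddChar G ℂ)
    {g : G} {r : ℝ} (hg : ‖g‖ ≤ r) (hχ : χ g ≠ 1) :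
    ∫ x, (closedBall 0 r).indicator χ x ∂μ = 0 := by
  have hmem := fun x => IsUltrametricDist.add_mem_closedBall_zero_iff (x := x) hg
  refine integral_eq_zero_of_add_left_eq_smul (g := g) hχ fun x => ?_
  by_cases hx : x ∈ closedBall 0 r
  · rw [indicator_of_mem ((hmem x).mpr hx), indicator_of_mem hx, AddChar.map_add_eq_mul,
      smul_eq_mul]
  · rw [indicator_of_notMem (mt (hmem x).mp hx), indicator_of_notMem hx, smul_zero]

end Translation

namespace Padic

lemma exists_int_div_pow_norm_sub_le_one (x : ℚ_[p]) :
    ∃ (m : ℤ) (n : ℕ), ‖x - ((m / p ^ n : ℚ) : ℚ_[p])‖ ≤ 1 := by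
  have hp : (1 : ℝ) < p := mod_cast (Fact.out : p.Prime).one_lt
  obtain ⟨n, hn⟩ := pow_unbounded_of_one_lt ‖x‖ hp
  have hy : ‖x * p ^ n‖ ≤ 1 := by
    rw [norm_mul, norm_pow, norm_p, inv_pow, ← div_eq_mul_inv]
    exact div_le_one_of_le₀ hn.le (by positivity)
  set y : ℤ_[p] := ⟨x * p ^ n, hy⟩
  refine ⟨(y.appr n : ℤ), n, ?_⟩
  have happr : ‖(y - y.appr n : ℤ_[p])‖ ≤ (p : ℝ) ^ (-n : ℤ) :=
    (PadicInt.norm_le_pow_iff_mem_span_pow _ _).mpr (y.appr_spec n)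
  have hpn : (p : ℚ_[p]) ^ n ≠ 0 := pow_ne_zero _ (mod_cast (Fact.out : p.Prime).ne_zero)
  have hx : x - ((((y.appr n : ℤ) : ℚ) / p ^ n : ℚ) : ℚ_[p]) =
      (y - y.appr n : ℤ_[p]) / p ^ n := by
    push_cast
    field_simp
    rfl
  rw [hx, norm_div, norm_pow, norm_p, div_le_one (by positivity), inv_pow, ← zpow_natCast,
    ← zpow_neg]
  exact happr

lemma p_le_norm_of_one_lt_norm {x : ℚ_[p]} (hx : 1 < ‖x‖) : p ≤ ‖x‖ := by
  simpa using mt (norm_le_pow_iff_norm_lt_pow_add_one x 0).mpr hx.not_ge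

lemma norm_le_inv_of_norm_lt_one {x : ℚ_[p]} (hx : ‖x‖ < 1) : ‖x‖ ≤ (p : ℝ)⁻¹ := by
  simpa using (norm_lt_pow_iff_norm_le_pow_sub_one x 0).mp (by simpa using hx)

lemma norm_two_mul_mul (hp : p ≠ 2) {τ : ℚ_[p]} (hτ : ‖τ‖ = 1) (w : ℚ_[p]) :
    ‖2 * τ * w‖ = ‖w‖ := by
  have h2 : ‖((2 : ℕ) : ℚ_[p])‖ = 1 :=
    norm_natCast_eq_one_iff.mpr ((Nat.coprime_primes Fact.out Nat.prime_two).mpr hp)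
  rw [norm_mul, norm_mul, ← Nat.cast_ofNat, h2, hτ, one_mul, one_mul]

lemma norm_natCast_mul_le (j : ℕ) (t : ℚ_[p]) : ‖(j : ℚ_[p]) * t‖ ≤ ‖t‖ :=
  (norm_mul_le _ _).trans
    (mul_le_of_le_one_left (norm_nonneg t) (IsUltrametricDist.norm_natCast_le_one ℚ_[p] j))

lemma eq_of_norm_natCast_sub_lt_one {i j : ℕ} (hi : i < p) (hj : j < p)
    (h : ‖(i : ℚ_[p]) - j‖ < 1) : i = j := by
  have hd : (p : ℤ) ∣ (i - j : ℤ) := norm_intCast_lt_one_iff.mp (by push_cast; exact h)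
  have := Int.eq_zero_of_dvd_of_natAbs_lt_natAbs hd (by omega)
  omega

lemma closedBall_zero_norm_eq_biUnion {t : ℚ_[p]} (ht : t ≠ 0) :
    closedBall (0 : ℚ_[p]) ‖t‖ = ⋃ j ∈ Finset.range p, closedBall (j * t) ‖p * t‖ := by
  ext v
  simp only [mem_iUnion, Finset.mem_range, mem_closedBall_iff_norm, sub_zero, exists_prop]
  constructor
  · intro hv
    obtain ⟨j, hj, hvj⟩ := PadicInt.exists_mem_range
      ⟨v / t, by rw [norm_div]; exact div_le_one_of_le₀ hv (norm_nonneg _)⟩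
    have hlt : ‖v / t - j‖ < 1 :=
      PadicInt.mem_nonunits.mp ((IsLocalRing.mem_maximalIdeal _).mp hvj)
    refine ⟨j, hj, ?_⟩
    rw [show v - j * t = (v / t - j) * t by field_simp, norm_mul, norm_mul, norm_p]
    exact mul_le_mul_of_nonneg_right (norm_le_inv_of_norm_lt_one hlt) (norm_nonneg _)
  · rintro ⟨j, -, hj⟩
    calc ‖v‖ = ‖(v - j * t) + j * t‖ := by rw [sub_add_cancel]
      _ ≤ max ‖v - j * t‖ ‖j * t‖ := nonarchimedean _ _
      _ ≤ ‖t‖ := max_le (hj.trans (norm_natCast_mul_le p t)) (norm_natCast_mul_le j t)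

lemma pairwiseDisjoint_closedBall {t : ℚ_[p]} (ht : t ≠ 0) :
    (Finset.range p : Set ℕ).PairwiseDisjoint fun j => closedBall ((j : ℚ_[p]) * t) ‖p * t‖ := by
  intro i hi j hj hij
  refine disjoint_left.mpr fun v hvi hvj => hij (eq_of_norm_natCast_sub_lt_one
    (Finset.mem_range.mp hi) (Finset.mem_range.mp hj) ?_)
  have hdist : dist ((i : ℚ_[p]) * t) (j * t) ≤ ‖p * t‖ :=
    (dist_triangle_max _ v _).trans (max_le (dist_comm v _ ▸ hvi) hvj)
  rw [dist_eq_norm, ← sub_mul, norm_mul, norm_mul, norm_p] at hdist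
  exact (le_of_mul_le_mul_right hdist (norm_pos_iff.mpr ht)).trans_lt
    (inv_lt_one_of_one_lt₀ (mod_cast (Fact.out : p.Prime).one_lt))

variable (μ : Measure ℚ_[p]) [μ.IsAddLeftInvariant]

lemma measure_closedBall_norm_eq_p_mul {t : ℚ_[p]} (ht : t ≠ 0) :
    μ (closedBall 0 ‖t‖) = p * μ (closedBall 0 ‖p * t‖) := by
  rw [closedBall_zero_norm_eq_biUnion ht,
    measure_biUnion_finset (pairwiseDisjoint_closedBall ht) fun _ _ => measurableSet_closedBall,
    Finset.sum_congr rfl fun j _ => measure_closedBall_center μ _ _, Finset.sum_const,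
    Finset.card_range, nsmul_eq_mul]

lemma measureReal_closedBall_norm_p (hμ : μ (closedBall 0 1) = 1) :
    μ.real (closedBall 0 ‖(p : ℚ_[p])‖) = (p : ℝ)⁻¹ := by
  have h := measure_closedBall_norm_eq_p_mul μ (one_ne_zero (α := ℚ_[p]))
  rw [norm_one, mul_one, hμ] at h
  rw [measureReal_def, ENNReal.eq_inv_of_mul_eq_one_left ((mul_comm _ _).trans h.symm),
    ENNReal.toReal_inv, ENNReal.toReal_natCast]

lemma measureReal_closedBall_norm_inv_p (hμ : μ (closedBall 0 1) = 1) :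
    μ.real (closedBall 0 ‖(p : ℚ_[p])⁻¹‖) = p := by
  have hp : (p : ℚ_[p]) ≠ 0 := mod_cast (Fact.out : p.Prime).ne_zero
  rw [measureReal_def, measure_closedBall_norm_eq_p_mul μ (inv_ne_zero hp), mul_inv_cancel₀ hp,
    norm_one, hμ, mul_one, ENNReal.toReal_natCast]

/-- `ψ` is the standard additive character of `ℚ_[p]`, the one of conductor `ℤ_[p]`. -/
def IsStdAddChar (ψ : ℚ_[p] → ℂ) : Prop :=
  ∀ (x : ℚ_[p]) (r : ℚ), (∃ (m : ℤ) (n : ℕ), r = m / p ^ n) →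
    ‖x - (r : ℚ_[p])‖ ≤ 1 → ψ x = Complex.exp (-(2 * Real.pi * Complex.I * r))

namespace IsStdAddChar

variable {ψ : ℚ_[p] → ℂ} (hψ : IsStdAddChar ψ)
include hψ

lemma apply_eq_one {x : ℚ_[p]} (hx : ‖x‖ ≤ 1) : ψ x = 1 := by
  simpa using hψ x 0 ⟨0, 0, by simp⟩ (by simpa using hx)

lemma map_add (x y : ℚ_[p]) : ψ (x + y) = ψ x * ψ y := by
  obtain ⟨m, n, hx⟩ := exists_int_div_pow_norm_sub_le_one x
  obtain ⟨m', n', hy⟩ := exists_int_div_pow_norm_sub_le_one y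
  have hp : (p : ℚ) ≠ 0 := mod_cast (Fact.out : p.Prime).ne_zero
  have hsum : (m / p ^ n + m' / p ^ n' : ℚ) =
      ((m * p ^ n' + m' * p ^ n : ℤ) : ℚ) / p ^ (n + n') := by
    push_cast
    field_simp
    ring
  have hxy : ‖x + y - ((m / p ^ n + m' / p ^ n' : ℚ) : ℚ_[p])‖ ≤ 1 := by
    rw [Rat.cast_add, add_sub_add_comm]
    exact (nonarchimedean _ _).trans (max_le hx hy)
  rw [hψ x _ ⟨m, n, rfl⟩ hx, hψ y _ ⟨m', n', rfl⟩ hy, hψ _ _ ⟨_, _, hsum⟩ hxy,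
    ← Complex.exp_add]
  push_cast
  ring_nf

lemma apply_inv_p_ne_one : ψ (p : ℚ_[p])⁻¹ ≠ 1 := by
  have hp : p.Prime := Fact.out
  rw [hψ _ (1 / p) ⟨1, 1, by simp⟩ (by simp), Ne, Complex.exp_eq_one_iff]
  rintro ⟨k, hk⟩
  have hkp : ((k * p : ℤ) : ℂ) = -1 := by
    have hpC : (p : ℂ) ≠ 0 := mod_cast hp.ne_zero
    push_cast at hk ⊢
    field_simp at hk
    linear_combination -hk
  have hdvd : (p : ℤ) ∣ 1 := ⟨-k, by linarith [(mod_cast hkp : k * p = -1)]⟩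
  exact hp.not_dvd_one (mod_cast hdvd)

noncomputable def toAddChar : AddChar ℚ_[p] ℂ where
  toFun := ψ
  map_zero_eq_one' := hψ.apply_eq_one (by simp)
  map_add_eq_mul' := hψ.map_add

lemma integral_indicator_closedBall {t : ℚ_[p]} (ht : t ≠ 0) (c : ℚ_[p]) :
    ∫ v, (closedBall 0 ‖t‖).indicator (fun v => ψ (c * v)) v ∂μ =
      if ‖c‖ ≤ ‖t⁻¹‖ then (μ.real (closedBall 0 ‖t‖) : ℂ) else 0 := by
  have hct : ‖c * t‖ ≤ 1 ↔ ‖c‖ ≤ ‖t⁻¹‖ := by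
    rw [norm_mul, norm_inv, ← one_div, le_div_iff₀ (norm_pos_iff.mpr ht)]
  by_cases h : ‖c * t‖ ≤ 1
  · have hψ1 : EqOn (fun v => ψ (c * v)) (fun _ => 1) (closedBall 0 ‖t‖) := fun v hv =>
      hψ.apply_eq_one <| by
        rw [norm_mul]
        exact (mul_le_mul_of_nonneg_left (mem_closedBall_zero_iff.mp hv) (norm_nonneg c)).trans
          ((norm_mul c t).symm.trans_le h)
    rw [if_pos (hct.mp h), indicator_congr hψ1,
      integral_indicator_const _ measurableSet_closedBall, Complex.real_smul, mul_one]
  · have hc : c ≠ 0 := by rintro rfl; simp at h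
    rw [if_neg (mt hct.mpr h)]
    refine integral_indicator_closedBall_addChar_eq_zero μ
      (hψ.toAddChar.compAddMonoidHom (AddMonoidHom.mulLeft c)) (g := c⁻¹ * (p : ℚ_[p])⁻¹) ?_ ?_
    · rw [norm_mul, norm_inv, norm_inv, norm_p, inv_inv, inv_mul_le_iff₀ (norm_pos_iff.mpr hc),
        ← norm_mul]
      exact p_le_norm_of_one_lt_norm (not_le.mp h)
    · simpa [toAddChar, mul_inv_cancel_left₀ hc] using hψ.apply_inv_p_ne_one

lemma integral_indicator_coset_mul_apply (hμ : μ (closedBall 0 1) = 1) (hp : p ≠ 2)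
    {τ : ℚ_[p]} (hτ : ‖τ‖ = 1) (z a : ℚ_[p]) {x : ℚ_[p]} (hx : ‖x‖ ≤ 1) (y : ℚ_[p]) :
    ∫ u, (closedBall z ‖(p : ℚ_[p])‖).indicator (fun _ => 1) u *
        ψ (τ * (x * y ^ 2 * p ^ 2 + 2 * u * y - 2 * a * y)) ∂μ =
      (closedBall 0 ‖(p : ℚ_[p])⁻¹‖).indicator
        (fun y => (p : ℂ)⁻¹ * ψ (2 * τ * (z - a) * y)) y := by
  have hp0 : (p : ℚ_[p]) ≠ 0 := mod_cast (Fact.out : p.Prime).ne_zero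
  have hsplit (v : ℚ_[p]) : τ * (x * y ^ 2 * p ^ 2 + 2 * (z + v) * y - 2 * a * y) =
      τ * x * (y * p) ^ 2 + (2 * τ * (z - a) * y + 2 * τ * y * v) := by ring
  rw [integral_indicator_closedBall_one_mul]
  simp_rw [hsplit, hψ.map_add, indicator_const_mul]
  rw [integral_const_mul, integral_const_mul, hψ.integral_indicator_closedBall μ hp0,
    norm_two_mul_mul hp hτ]
  by_cases hy : ‖y‖ ≤ ‖(p : ℚ_[p])⁻¹‖
  · have hyp : ‖y * p‖ ≤ 1 := by
      rwa [norm_mul, ← le_div_iff₀ (norm_pos_iff.mpr hp0), one_div, ← norm_inv]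
    have hquad : ‖τ * x * (y * p) ^ 2‖ ≤ 1 := by
      rw [norm_mul, norm_mul, hτ, one_mul, norm_pow]
      exact mul_le_one₀ hx (by positivity) (pow_le_one₀ (norm_nonneg _) hyp)
    rw [if_pos hy, indicator_of_mem (mem_closedBall_zero_iff.mpr hy), hψ.apply_eq_one hquad,
      measureReal_closedBall_norm_p μ hμ]
    push_cast
    ring
  · rw [if_neg hy, indicator_of_notMem (mt mem_closedBall_zero_iff.mp hy), mul_zero, mul_zero,
      mul_zero]

end IsStdAddChar

end Padic

/-- The double-integral computation of Lemma 9.6: the odd Weil representation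
applied to a lower-triangular unipotent fixes the indicator of `z + pℤ_p`. -/
theorem weil_rep_fixes_coset_indicator (hodd : p ≠ 2) (ψ : ℚ_[p] → ℂ)
    (hψ : ∀ (x : ℚ_[p]) (r : ℚ), (∃ (m : ℤ) (n : ℕ), r = m / p ^ n) →
      ‖x - (r : ℚ_[p])‖ ≤ 1 → ψ x = Complex.exp (-(2 * Real.pi * Complex.I * r)))
    (μ : Measure ℚ_[p])
    (hinv : ∀ (a : ℚ_[p]) (s : Set ℚ_[p]), μ ((a + ·) ⁻¹' s) = μ s)
    (hnorm : μ {x : ℚ_[p] | ‖x‖ ≤ 1} = 1)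
    (τ : ℚ_[p]) (hτ : ‖τ‖ = 1)
    (z a x : ℚ_[p]) (hx : ‖x‖ ≤ 1) :
    ∫ y : ℚ_[p], (∫ u : ℚ_[p],
        Set.indicator {w : ℚ_[p] | ‖w - z‖ ≤ (p : ℝ)⁻¹} (fun _ => (1 : ℂ)) u *
          ψ (τ * (x * y ^ 2 * p ^ 2 + 2 * u * y - 2 * a * y)) ∂μ) ∂μ =
      Set.indicator {w : ℚ_[p] | ‖w - z‖ ≤ (p : ℝ)⁻¹} (fun _ => (1 : ℂ)) a := by
  have hψ : Padic.IsStdAddChar ψ := hψ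
  have : μ.IsAddLeftInvariant := Measure.IsAddLeftInvariant.of_measure_preimage_add hinv
  have hμ : μ (closedBall 0 1) = 1 := by rw [← hnorm]; congr; ext; simp
  have hp : (p : ℚ_[p])⁻¹ ≠ 0 := inv_ne_zero (mod_cast (Fact.out : p.Prime).ne_zero)
  have hS : {w : ℚ_[p] | ‖w - z‖ ≤ (p : ℝ)⁻¹} = closedBall z ‖(p : ℚ_[p])‖ := by
    ext w
    rw [mem_closedBall_iff_norm, Padic.norm_p]
    rfl
  simp_rw [hS, hψ.integral_indicator_coset_mul_apply μ hμ hodd hτ z a hx, indicator_const_mul]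
  rw [integral_const_mul, hψ.integral_indicator_closedBall μ hp,
    Padic.measureReal_closedBall_norm_inv_p μ hμ, Padic.norm_two_mul_mul hodd hτ, inv_inv]
  by_cases ha : ‖z - a‖ ≤ ‖(p : ℚ_[p])‖
  · rw [if_pos ha, indicator_of_mem (mem_closedBall_iff_norm'.mpr ha), Complex.ofReal_natCast,
      inv_mul_cancel₀ (mod_cast (Fact.out : p.Prime).ne_zero)]
  · rw [if_neg ha, indicator_of_notMem (mt mem_closedBall_iff_norm'.mp ha), mul_zero]
end
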